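/- arXiv:1701.02168 — 2 statements merged into one kernel-verified Lean document; each statement's English description precedes it below -/
import Mathlib

section
/- Let A be a parity automaton with costs. For every state q and letter a, the one-transition run (q, a, δ(q,a)) has type Upd_A(Init_A(q), a); and for every non-empty finite run ρ = (q_0,a_0,q_1)⋯(q_{n−1},a_{n−1},q_n) of A and every letter a ∈ Σ: if ρ has type t, then the extended run ρ · (q_n, a, δ(q_n,a)) has type Upd_A(t, a). -/
attribute [local instance] Classical.propDecidable

noncomputable section

/-- A parity automaton with costs `(Q, A, qI, δ, Ω, Cst)`.
`Cst q a = true` means that the transition `(q, a, δ q a)` is an increment-transition,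
`Cst q a = false` means it is an `ε`-transition. -/
structure PACost (Q : Type) (A : Type) where
  qI : Q
  δ : Q → A → Q
  Ω : Q → ℕ
  Cst : Q → A → Bool

namespace PACost

variable {Q A : Type}

/-- The state reached after processing the first `n` letters of `w` starting in `q0`. -/
def stateAt (M : PACost Q A) (q0 : Q) (w : ℕ → A) : ℕ → Q
  | 0 => q0
  | n + 1 => M.δ (stateAt M q0 w n) (w n)

/-- The cost (number of increment-transitions) of the run infix between positions `m` and `n`. -/
def segCost (M : PACost Q A) (q0 : Q) (w : ℕ → A) (m n : ℕ) : ℕ :=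
  ((Finset.Ico m n).filter fun j => M.Cst (stateAt M q0 w j) (w j) = true).card

/-- `Ans c`: the set of even colors of `M` that are larger than `c`. -/
def Ans (M : PACost Q A) (c : ℕ) : Set ℕ :=
  { c' | (∃ q, M.Ω q = c') ∧ c < c' ∧ Even c' }

/-- The cost-of-response at position `n` of the run of `M` on `w` starting in `q0`. -/
def Cor (M : PACost Q A) (q0 : Q) (w : ℕ → A) (n : ℕ) : ℕ∞ :=
  if Even (M.Ω (stateAt M q0 w n)) then 0
  else
    sInf { c : ℕ∞ | ∃ n', n < n' ∧
      M.Ω (stateAt M q0 w n') ∈ M.Ans (M.Ω (stateAt M q0 w n)) ∧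
      c = (segCost M q0 w n n' : ℕ∞) }

/-- The run of `M` on `w` starting in `q0` satisfies the parity condition with costs. -/
def Accepting (M : PACost Q A) (q0 : Q) (w : ℕ → A) : Prop :=
  Filter.limsup (fun n => Cor M q0 w n) Filter.atTop < ⊤

/-- The language of `M`. -/
def Lang (M : PACost Q A) : Set (ℕ → A) := { w | Accepting M M.qI w }

/-- `M` is a finitary Büchi automaton: every transition is an increment-transition and
all colors are `1` or `2`. -/
def FinBuchi (M : PACost Q A) : Prop :=
  (∀ q a, M.Cst q a = true) ∧ ∀ q, M.Ω q = 1 ∨ M.Ω q = 2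

end PACost

/-- The finite segment `w m, w (m+1), …, w (n-1)` of an infinite word `w`. -/
def seg {A : Type} (w : ℕ → A) (m n : ℕ) : List A :=
  (List.range (n - m)).map fun i => w (m + i)

namespace PACost

/-- Types of runs: `(first state, last state, max even color, max unanswered odd color,
increment occurred)`. -/
abbrev RType (Q : Type) := Q × Q × WithBot ℕ × WithBot ℕ × Bool

variable {Q A : Type}

/-- The type of the non-empty finite run of `M` starting in `q` processing `l`. -/
def runType (M : PACost Q A) (q : Q) (l : List A) : RType Q :=
  let sts := List.scanl M.δ q l
  let st : ℕ → Q := fun j => sts.getD j q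
  ( q,
    l.foldl M.δ q,
    ((Finset.range sts.length).filter fun j => Even (M.Ω (st j))).sup
      (fun j => (M.Ω (st j) : WithBot ℕ)),
    ((Finset.range sts.length).filter fun j =>
        Odd (M.Ω (st j)) ∧ ∀ j' < sts.length, j < j' →
          ¬(Even (M.Ω (st j')) ∧ M.Ω (st j) < M.Ω (st j'))).sup
      (fun j => (M.Ω (st j) : WithBot ℕ)),
    (sts.zip l).any fun p => M.Cst p.1 p.2 )

/-- The type of the empty run prefix starting in `q`. -/
def InitT (M : PACost Q A) (q : Q) : RType Q :=
  ( q, q,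
    if Even (M.Ω q) then (M.Ω q : WithBot ℕ) else ⊥,
    if Odd (M.Ω q) then (M.Ω q : WithBot ℕ) else ⊥,
    false )

/-- The type-update function. -/
def UpdT (M : PACost Q A) (t : RType Q) (a : A) : RType Q :=
  match t with
  | (q0, q1, c0, c1, ℓ) =>
    let q1' := M.δ q1 a
    ( q0, q1',
      if Even (M.Ω q1') then max c0 ((M.Ω q1' : WithBot ℕ)) else c0,
      if Odd (M.Ω q1') then max c1 ((M.Ω q1' : WithBot ℕ))
      else if ∃ c : ℕ, c1 = (c : WithBot ℕ) ∧ M.Ω q1' ∈ M.Ans c then ⊥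
      else c1,
      ℓ || M.Cst q1 a )

end PACost

/-!
The type of a run is read off the sequence of colors it visits: the even component is a
maximum over the even positions, the request component a maximum over the unanswered odd
positions. Appending a state of color `e` adds one position. For odd `e` the new position is
an unanswered request and no old request gets answered. For even `e` exactly the requests
below `e` get answered, so the maximal unanswered request either survives (if it is at least
`e`) or all of them are answered at once; this is the reset to `⊥` performed by `Upd`.
-/

namespace Finset

theorem sup_filter_le_eq_ite {ι β : Type*} [LinearOrder β] [OrderBot β] (s : Finset ι)
    (f : ι → β) (e : β) [DecidablePred fun j => e ≤ f j] :
    (s.filter fun j => e ≤ f j).sup f = if s.sup f < e then ⊥ else s.sup f := by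
  split_ifs with h
  · rw [filter_eq_empty_iff.mpr fun j hj hle => not_le.mpr h (hle.trans (le_sup hj)), sup_empty]
  · refine le_antisymm (sup_mono (filter_subset _ _)) ?_
    rcases s.eq_empty_or_nonempty with rfl | hs
    · simp
    obtain ⟨j, hj, hjmax⟩ := s.exists_mem_eq_sup hs f
    rw [hjmax]
    exact le_sup (mem_filter.mpr ⟨hj, hjmax ▸ not_lt.mp h⟩)

end Finset

theorem WithBot.ite_exists_coe_lt {α : Type*} [Preorder α] [DecidableLT α] (c : WithBot α)
    (e : α) :
    (if ∃ c' : α, c = c' ∧ c' < e then ⊥ else c) = if c < e then ⊥ else c := by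
  cases c using WithBot.recBotCoe <;> simp

namespace List

theorem zip_scanl_append_singleton {α β : Type*} (f : β → α → β) (b : β) (l : List α)
    (a : α) :
    (scanl f b (l ++ [a])).zip (l ++ [a]) = (scanl f b l).zip l ++ [(l.foldl f b, a)] := by
  induction l generalizing b with
  | nil => simp
  | cons c l ih => simp [ih]

end List

namespace PACost

variable {Q A : Type}

def maxEvenColor (f : ℕ → ℕ) (n : ℕ) : WithBot ℕ :=
  ((Finset.range n).filter fun j => Even (f j)).sup fun j => (f j : WithBot ℕ)

def IsUnanswered (f : ℕ → ℕ) (n j : ℕ) : Prop :=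
  Odd (f j) ∧ ∀ j' < n, j < j' → ¬(Even (f j') ∧ f j < f j')

def maxUnansweredColor (f : ℕ → ℕ) (n : ℕ) : WithBot ℕ :=
  ((Finset.range n).filter (IsUnanswered f n)).sup fun j => (f j : WithBot ℕ)

@[simp] theorem maxEvenColor_zero (f : ℕ → ℕ) : maxEvenColor f 0 = ⊥ := rfl

@[simp] theorem maxUnansweredColor_zero (f : ℕ → ℕ) : maxUnansweredColor f 0 = ⊥ := rfl

theorem maxEvenColor_congr {f g : ℕ → ℕ} {n : ℕ} (h : ∀ j < n, f j = g j) :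
    maxEvenColor f n = maxEvenColor g n :=
  Finset.sup_congr (Finset.filter_congr fun j hj => by rw [h j (Finset.mem_range.mp hj)])
    fun j hj => by rw [h j (Finset.mem_range.mp (Finset.mem_filter.mp hj).1)]

theorem isUnanswered_congr {f g : ℕ → ℕ} {n j : ℕ} (h : ∀ j < n, f j = g j) (hj : j < n) :
    IsUnanswered f n j ↔ IsUnanswered g n j := by
  unfold IsUnanswered
  refine and_congr (by rw [h j hj]) (forall₂_congr fun j' hj' => ?_)
  rw [h j hj, h j' hj']

theorem maxUnansweredColor_congr {f g : ℕ → ℕ} {n : ℕ} (h : ∀ j < n, f j = g j) :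
    maxUnansweredColor f n = maxUnansweredColor g n :=
  Finset.sup_congr
    (Finset.filter_congr fun j hj => isUnanswered_congr h (Finset.mem_range.mp hj))
    fun j hj => by rw [h j (Finset.mem_range.mp (Finset.mem_filter.mp hj).1)]

theorem maxEvenColor_succ (f : ℕ → ℕ) (n : ℕ) :
    maxEvenColor f (n + 1) =
      if Even (f n) then max (maxEvenColor f n) (f n) else maxEvenColor f n := by
  unfold maxEvenColor
  rw [Finset.range_add_one, Finset.filter_insert]
  split_ifs
  · rw [Finset.sup_insert, sup_comm]
  · rfl

theorem isUnanswered_succ_self (f : ℕ → ℕ) (n : ℕ) :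
    IsUnanswered f (n + 1) n ↔ Odd (f n) :=
  and_iff_left fun _ _ hlt hgt => absurd hlt (by omega)

theorem isUnanswered_succ {f : ℕ → ℕ} {n j : ℕ} (hj : j < n) :
    IsUnanswered f (n + 1) j ↔ IsUnanswered f n j ∧ ¬(Even (f n) ∧ f j < f n) := by
  unfold IsUnanswered
  constructor
  · rintro ⟨hodd, hnot⟩
    exact ⟨⟨hodd, fun j' hj' => hnot j' (by omega)⟩, hnot n (by omega) hj⟩
  · rintro ⟨⟨hodd, hnot⟩, hlast⟩
    refine ⟨hodd, fun j' hj' hjj' => ?_⟩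
    rcases Nat.lt_succ_iff_lt_or_eq.mp hj' with hj' | rfl
    exacts [hnot j' hj' hjj', hlast]

theorem maxUnansweredColor_succ (f : ℕ → ℕ) (n : ℕ) :
    maxUnansweredColor f (n + 1) =
      if Odd (f n) then max (maxUnansweredColor f n) (f n)
      else if maxUnansweredColor f n < f n then ⊥ else maxUnansweredColor f n := by
  unfold maxUnansweredColor
  rw [Finset.range_add_one, Finset.filter_insert,
    Finset.filter_congr fun j hj => isUnanswered_succ (Finset.mem_range.mp hj)]
  by_cases hodd : Odd (f n)
  · have hnot_even : ¬Even (f n) := Nat.not_even_iff_odd.mpr hodd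
    rw [if_pos ((isUnanswered_succ_self f n).mpr hodd), if_pos hodd, Finset.sup_insert, sup_comm]
    simp only [hnot_even, false_and, not_false_eq_true, and_true]
  · have heven : Even (f n) := Nat.not_odd_iff_even.mp hodd
    rw [if_neg (mt (isUnanswered_succ_self f n).mp hodd), if_neg hodd]
    convert Finset.sup_filter_le_eq_ite _ (fun j => (f j : WithBot ℕ)) (f n : WithBot ℕ) using 2
    · rfl
    · rw [Finset.filter_filter]
      refine Finset.filter_congr fun j _ => ?_
      simp [heven]

theorem Ω_mem_Ans_iff {M : PACost Q A} {q : Q} (hq : Even (M.Ω q)) (c : ℕ) :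
    M.Ω q ∈ M.Ans c ↔ c < M.Ω q :=
  ⟨fun h => h.2.1, fun h => ⟨⟨q, rfl⟩, h, hq⟩⟩

def runColors (M : PACost Q A) (q : Q) (l : List A) (j : ℕ) : ℕ :=
  M.Ω ((List.scanl M.δ q l).getD j q)

theorem runType_eq (M : PACost Q A) (q : Q) (l : List A) :
    M.runType q l =
      (q, l.foldl M.δ q, maxEvenColor (M.runColors q l) (l.length + 1),
        maxUnansweredColor (M.runColors q l) (l.length + 1),
        ((List.scanl M.δ q l).zip l).any fun p => M.Cst p.1 p.2) := by
  simp only [runType, List.length_scanl]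
  congr

theorem runColors_of_le_length (M : PACost Q A) (q : Q) {l : List A} {j : ℕ}
    (hj : j ≤ l.length) : M.runColors q l j = M.Ω ((l.take j).foldl M.δ q) := by
  rw [runColors, List.getD_eq_getElem _ _ (by simpa [Nat.lt_succ_iff] using hj),
    List.getElem_scanl]

theorem runColors_append_singleton (M : PACost Q A) (q : Q) (l : List A) (a : A) {j : ℕ}
    (hj : j < l.length + 1) : M.runColors q (l ++ [a]) j = M.runColors q l j := by
  rw [runColors_of_le_length _ _ (by simp; omega), runColors_of_le_length _ _ (by omega),
    List.take_append_of_le_length (by omega)]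

theorem runColors_append_singleton_length (M : PACost Q A) (q : Q) (l : List A) (a : A) :
    M.runColors q (l ++ [a]) (l.length + 1) = M.Ω (M.δ (l.foldl M.δ q) a) := by
  have hlen : l.length + 1 = (l ++ [a]).length := by simp
  rw [runColors_of_le_length _ _ hlen.le, hlen, List.take_length, List.foldl_append,
    List.foldl_cons, List.foldl_nil]

@[simp] theorem runColors_zero (M : PACost Q A) (q : Q) (l : List A) :
    M.runColors q l 0 = M.Ω q := by
  simp [runColors_of_le_length]

theorem runType_nil (M : PACost Q A) (q : Q) : M.runType q [] = M.InitT q := by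
  rw [runType_eq]
  simp [InitT, maxEvenColor_succ, maxUnansweredColor_succ]

theorem runType_append_singleton (M : PACost Q A) (q : Q) (l : List A) (a : A) :
    M.runType q (l ++ [a]) = M.UpdT (M.runType q l) a := by
  have hprefix := fun j => M.runColors_append_singleton q l a (j := j)
  rw [runType_eq, runType_eq, List.zip_scanl_append_singleton, List.length_append,
    List.length_singleton]
  simp only [UpdT, maxEvenColor_succ _ (l.length + 1), maxUnansweredColor_succ _ (l.length + 1),
    maxEvenColor_congr hprefix, maxUnansweredColor_congr hprefix,
    runColors_append_singleton_length, List.foldl_append, List.foldl_cons, List.foldl_nil,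
    List.any_append, List.any_cons, List.any_nil, Bool.or_false, Prod.mk.injEq, true_and, and_true]
  by_cases hodd : Odd (M.Ω (M.δ (l.foldl M.δ q) a))
  · simp only [hodd, if_true]
  · simp only [hodd, if_false, Ω_mem_Ans_iff (Nat.not_odd_iff_even.mp hodd)]
    exact (WithBot.ite_exists_coe_lt _ _).symm

end PACost

theorem statement2_general {Q A : Type} (M : PACost Q A) :
    (∀ (q : Q) (a : A), M.runType q [a] = M.UpdT (M.InitT q) a) ∧
    (∀ (q : Q) (l : List A) (a : A), l ≠ [] →
      M.runType q (l ++ [a]) = M.UpdT (M.runType q l) a) := by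
  refine ⟨fun q a => ?_, fun q l a _ => M.runType_append_singleton q l a⟩
  rw [← M.runType_nil q, ← M.runType_append_singleton, List.nil_append]

/-- types are computed on the fly. The one-transition run `(q, a, δ q a)`
has type `Upd (Init q) a`, and extending a non-empty run of type `t` by one transition on
letter `a` yields a run of type `Upd t a`. -/
theorem statement2 {Q A : Type} [Fintype Q] [Fintype A] (M : PACost Q A) :
    (∀ (q : Q) (a : A), M.runType q [a] = M.UpdT (M.InitT q) a) ∧
    (∀ (q : Q) (l : List A) (a : A), l ≠ [] →
      M.runType q (l ++ [a]) = M.UpdT (M.runType q l) a) :=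
  statement2_general M
end
end

section
/- There is a constant c > 0 such that for every n > 0 there exists a finitary Büchi automaton A''_n over the alphabet Σ_I × Σ_O with Σ_I = {0,1} and Σ_O = {1,…,n} × {0,1} and with at most c·n² states such that for every j ∈ {0, 1, …, n}: Player O wins Γ_{f_j}(L(A''_n)), an optimal winning strategy for Player O in Γ_{f_j}(L(A''_n)) exists, and it has cost 2(n+1) − j. -/
attribute [local instance] Classical.propDecidable

noncomputable section

section DelayGames

variable {I O : Type}

/-- The `n`-th letter of the concatenation `u 0 ++ u 1 ++ u 2 ++ ⋯`
(well-defined whenever all blocks are non-empty). -/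
def flatWord [Inhabited I] (u : ℕ → List I) (n : ℕ) : I :=
  (((List.range (n + 1)).map u).flatten).getD n default

/-- A delay function maps every round to a positive number of letters. -/
def DelayFn (f : ℕ → ℕ) : Prop := ∀ i, 0 < f i

/-- The constant delay function `f_k` with `f_k 0 = k + 1` and `f_k i = 1` for `i > 0`. -/
def constDF (k : ℕ) : ℕ → ℕ := fun i => if i = 0 then k + 1 else 1

/-- The sequence of letters Player I has produced up to (and including) round `i`. -/
def oHist (u : ℕ → List I) (i : ℕ) : List I := ((List.range (i + 1)).map u).flatten

/-- `τO` is a winning strategy for Player O in the delay game with delay function `f`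
and winning condition `L`. -/
def OWinning [Inhabited I] (f : ℕ → ℕ) (L : Set (ℕ → I × O)) (τO : List I → O) : Prop :=
  ∀ u : ℕ → List I, ∀ v : ℕ → O,
    (∀ i, (u i).length = f i) →
    (∀ i, v i = τO (oHist u i)) →
    (fun n => (flatWord u n, v n)) ∈ L

/-- Player O wins the delay game `Γ_f(L)`. -/
def OWins [Inhabited I] (f : ℕ → ℕ) (L : Set (ℕ → I × O)) : Prop :=
  ∃ τO : List I → O, OWinning f L τO

/-- `τI` is a winning strategy for Player I in the delay game with delay function `f`
and winning condition `L`. -/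
def IWinning [Inhabited I] (f : ℕ → ℕ) (L : Set (ℕ → I × O)) (τI : List O → List I) : Prop :=
  (∀ w, (τI w).length = f w.length) ∧
  ∀ u : ℕ → List I, ∀ v : ℕ → O,
    (∀ i, u i = τI ((List.range i).map v)) →
    (fun n => (flatWord u n, v n)) ∉ L

/-- Player I wins the delay game `Γ_f(L)`. -/
def IWins [Inhabited I] (f : ℕ → ℕ) (L : Set (ℕ → I × O)) : Prop :=
  ∃ τI : List O → List I, IWinning f L τI

/-- The cost of a strategy `τO` of Player O: the supremum of the word-costs `wc` of the
outcomes of plays consistent with `τO`. -/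
def stratCost [Inhabited I] (wc : (ℕ → I × O) → ℕ∞) (f : ℕ → ℕ) (τO : List I → O) : ℕ∞ :=
  ⨆ (u : ℕ → List I) (v : ℕ → O)
    (_ : (∀ i, (u i).length = f i) ∧ ∀ i, v i = τO (oHist u i)),
    wc (fun n => (flatWord u n, v n))

/-- An optimal winning strategy for Player O in `Γ_f(L)` exists and has cost `c`. -/
def OptimalCostIs [Inhabited I] (L : Set (ℕ → I × O)) (wc : (ℕ → I × O) → ℕ∞)
    (f : ℕ → ℕ) (c : ℕ∞) : Prop :=
  (∃ τO, OWinning f L τO ∧ stratCost wc f τO = c) ∧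
  ∀ τO, OWinning f L τO → c ≤ stratCost wc f τO

end DelayGames

/-- The cost `limsup_n Cor(ρ(w), n)` of the run of `M` on an infinite word `w`. -/
def PACost.wCost {Q I O : Type} (M : PACost Q (I × O)) : (ℕ → I × O) → ℕ∞ :=
  fun w => Filter.limsup (fun n => PACost.Cor M M.qI w n) Filter.atTop

/-!
The automaton cuts the word into blocks of length `2 n + 3`. At the start of each block Player O
claims that the input bit `d ∈ {1, …, n}` positions later equals some `b`. A true claim moves the
block's first Büchi visit from offset `2 n + 2` to offset `2 n + 2 - d`; a false one leaves it in
place. So every word is accepted, and the block start has cost of response `2 (n + 1) - d` after a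
true claim and `2 (n + 1)` after a false one. With lookahead `j` Player O can always truthfully
claim about the last bit seen (`d = j`), while Player I can refute every claim with `d > j`, since
that bit is not yet chosen.
-/

namespace PACost

variable {Q Q' A : Type}

section FinBuchi

variable {M : PACost Q A} {q0 : Q} {w : ℕ → A}

lemma segCost_eq_sub (hM : M.FinBuchi) (m m' : ℕ) : M.segCost q0 w m m' = m' - m := by
  rw [segCost, Finset.filter_true_of_mem fun j _ => hM.1 _ _, Nat.card_Ico]

lemma eq_two_of_mem_Ans_one (hM : M.FinBuchi) {c : ℕ} (hc : c ∈ M.Ans 1) : c = 2 := by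
  obtain ⟨⟨q, rfl⟩, hlt, -⟩ := hc
  rcases hM.2 q with h | h <;> omega

lemma Cor_le_of_exists (hM : M.FinBuchi) {m K : ℕ}
    (h : M.Ω (M.stateAt q0 w m) = 1 →
      ∃ m', m < m' ∧ m' ≤ m + K ∧ M.Ω (M.stateAt q0 w m') = 2) :
    M.Cor q0 w m ≤ K := by
  rcases hM.2 (M.stateAt q0 w m) with h1 | h2
  · obtain ⟨m', hlt, hle, hm'⟩ := h h1
    rw [Cor, if_neg (by rw [h1]; decide)]
    refine sInf_le_of_le ⟨m', hlt, ?_, rfl⟩ (by rw [segCost_eq_sub hM]; exact_mod_cast (by omega))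
    rw [h1, hm']
    exact ⟨⟨_, hm'⟩, one_lt_two, even_two⟩
  · rw [Cor, if_pos (by rw [h2]; exact even_two)]
    exact zero_le

lemma le_Cor_of_forall (hM : M.FinBuchi) {m K : ℕ} (h1 : M.Ω (M.stateAt q0 w m) = 1)
    (h : ∀ m', m < m' → M.Ω (M.stateAt q0 w m') = 2 → m + K ≤ m') :
    K ≤ M.Cor q0 w m := by
  rw [Cor, if_neg (by rw [h1]; decide)]
  refine le_sInf ?_
  rintro c ⟨m', hlt, hans, rfl⟩
  rw [h1] at hans
  have := h m' hlt (eq_two_of_mem_Ans_one hM hans)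
  rw [segCost_eq_sub hM]
  exact_mod_cast (by omega)

end FinBuchi

def mapEquiv (M : PACost Q A) (e : Q ≃ Q') : PACost Q' A where
  qI := e M.qI
  δ q a := e (M.δ (e.symm q) a)
  Ω q := M.Ω (e.symm q)
  Cst q a := M.Cst (e.symm q) a

variable (M : PACost Q A) (e : Q ≃ Q')

lemma stateAt_mapEquiv (q0 : Q) (w : ℕ → A) (m : ℕ) :
    (M.mapEquiv e).stateAt (e q0) w m = e (M.stateAt q0 w m) := by
  induction m with
  | zero => rfl
  | succ m ih =>
    show e (M.δ (e.symm ((M.mapEquiv e).stateAt (e q0) w m)) (w m)) = _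
    rw [ih, e.symm_apply_apply]
    rfl

lemma Ans_mapEquiv : (M.mapEquiv e).Ans = M.Ans := by
  ext c c'
  simp only [Ans, mapEquiv, Set.mem_ofPred_eq, e.symm.surjective.exists]

lemma Cor_mapEquiv (q0 : Q) (w : ℕ → A) : (M.mapEquiv e).Cor (e q0) w = M.Cor q0 w := by
  ext m
  have hseg : ∀ m', (M.mapEquiv e).segCost (e q0) w m m' = M.segCost q0 w m m' := by
    intro m'
    unfold segCost
    congr! 3 with j
    exact congrArg (M.Cst · (w j)) (by rw [stateAt_mapEquiv, e.symm_apply_apply])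
  have hΩ : ∀ m',
      (M.mapEquiv e).Ω ((M.mapEquiv e).stateAt (e q0) w m') = M.Ω (M.stateAt q0 w m') := by
    intro m'
    rw [stateAt_mapEquiv]
    exact congrArg M.Ω (e.symm_apply_apply _)
  simp only [Cor, Ans_mapEquiv, hseg, hΩ]

lemma finBuchi_mapEquiv (hM : M.FinBuchi) : (M.mapEquiv e).FinBuchi :=
  ⟨fun _ _ => hM.1 _ _, fun _ => hM.2 _⟩

lemma Lang_mapEquiv : (M.mapEquiv e).Lang = M.Lang := by
  ext w
  show (M.mapEquiv e).Accepting (e M.qI) w ↔ M.Accepting M.qI w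
  rw [Accepting, Accepting, Cor_mapEquiv]

lemma wCost_mapEquiv {I O : Type} (M : PACost Q (I × O)) :
    (M.mapEquiv e).wCost = M.wCost := by
  ext w
  simp only [wCost]
  rw [show (M.mapEquiv e).qI = e M.qI from rfl, Cor_mapEquiv]

end PACost

section DelayGames

variable {I O : Type}

lemma oHist_zero (u : ℕ → List I) : oHist u 0 = u 0 := by
  simp [oHist]

lemma oHist_succ (u : ℕ → List I) (i : ℕ) : oHist u (i + 1) = oHist u i ++ u (i + 1) := by
  simp [oHist, List.range_succ]

lemma oHist_prefix (u : ℕ → List I) {i i' : ℕ} (h : i ≤ i') : oHist u i <+: oHist u i' := by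
  induction i', h using Nat.le_induction with
  | base => exact List.prefix_refl _
  | succ k _ ih => exact ih.trans (by rw [oHist_succ]; exact List.prefix_append _ _)

lemma lt_length_oHist {u : ℕ → List I} (hu : ∀ i, 0 < (u i).length) (i : ℕ) :
    i < (oHist u i).length := by
  induction i with
  | zero => simpa [oHist_zero] using hu 0
  | succ i ih => rw [oHist_succ, List.length_append]; linarith [hu (i + 1)]

lemma length_oHist_constDF {u : ℕ → List I} {j : ℕ} (hu : ∀ i, (u i).length = constDF j i)
    (i : ℕ) : (oHist u i).length = i + j + 1 := by
  induction i with
  | zero => simp [oHist_zero, hu, constDF]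
  | succ i ih => rw [oHist_succ, List.length_append, ih, hu]; simp [constDF]; omega

def constDFBlocks (j : ℕ) (α : ℕ → I) (i : ℕ) : List I :=
  if i = 0 then (List.range (j + 1)).map α else [α (i + j)]

lemma length_constDFBlocks (j : ℕ) (α : ℕ → I) (i : ℕ) :
    (constDFBlocks j α i).length = constDF j i := by
  unfold constDFBlocks constDF
  split <;> simp

lemma oHist_constDFBlocks (j : ℕ) (α : ℕ → I) (i : ℕ) :
    oHist (constDFBlocks j α) i = (List.range (i + j + 1)).map α := by
  induction i with
  | zero => simp [oHist_zero, constDFBlocks]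
  | succ i ih =>
    rw [oHist_succ, ih, constDFBlocks, if_neg i.succ_ne_zero,
      show i + 1 + j + 1 = i + j + 1 + 1 by omega, List.range_succ (n := i + j + 1),
      List.map_append, List.map_singleton, show i + 1 + j = i + j + 1 by omega]

variable [Inhabited I]

lemma oHist_eq_map_flatWord {u : ℕ → List I} (hu : ∀ i, 0 < (u i).length) (i : ℕ) :
    oHist u i = (List.range (oHist u i).length).map (flatWord u) := by
  refine List.ext_getElem (by simp) fun m h _ => ?_
  rw [List.getElem_map, List.getElem_range]
  show _ = (oHist u m).getD m default
  rw [List.getD_eq_getElem _ _ (lt_length_oHist hu m)]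
  rcases le_total m i with hmi | him
  · exact ((oHist_prefix u hmi).getElem _).symm
  · exact (oHist_prefix u him).getElem h

lemma flatWord_constDFBlocks (j : ℕ) (α : ℕ → I) : flatWord (constDFBlocks j α) = α := by
  funext m
  show (oHist (constDFBlocks j α) m).getD m default = α m
  rw [oHist_constDFBlocks, List.getD_eq_getElem _ _ (by simp)]
  simp

/-- Player I spells out `α`; when answering at position `m`, Player O has seen
`α 0, …, α (m + j)`. -/
def outcome (j : ℕ) (τO : List I → O) (α : ℕ → I) : ℕ → I × O :=
  fun m => (α m, τO ((List.range (m + j + 1)).map α))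

lemma stratCost_constDF (wc : (ℕ → I × O) → ℕ∞) (j : ℕ) (τO : List I → O) :
    stratCost wc (constDF j) τO = ⨆ α, wc (outcome j τO α) := by
  apply le_antisymm
  · refine iSup_le fun u => iSup_le fun v => iSup_le fun ⟨hu, hv⟩ => le_iSup_of_le (flatWord u) ?_
    have hpos : ∀ i, 0 < (u i).length := fun i => by rw [hu]; unfold constDF; split <;> omega
    refine le_of_eq (congrArg wc (funext fun m => ?_))
    rw [outcome, hv, oHist_eq_map_flatWord hpos, length_oHist_constDF hu]
  · refine iSup_le fun α => le_iSup_of_le (constDFBlocks j α) (le_iSup_of_le _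
      (le_iSup_of_le ⟨length_constDFBlocks j α, fun _ => rfl⟩ (le_of_eq ?_)))
    simp only [flatWord_constDFBlocks, oHist_constDFBlocks]
    rfl

end DelayGames

def seqOfPrefix {I : Type} (g : List I → I) (m : ℕ) : I :=
  g (List.ofFn fun i : Fin m => seqOfPrefix g i)
termination_by m
decreasing_by exact i.isLt

lemma seqOfPrefix_apply {I : Type} (g : List I → I) (m : ℕ) :
    seqOfPrefix g m = g ((List.range m).map (seqOfPrefix g)) := by
  rw [seqOfPrefix, ← List.map_coe_finRange_eq_range, List.map_map, List.ofFn_eq_map]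
  rfl

namespace GradualTradeoff

abbrev Letter (n : ℕ) := Bool × (Fin n × Bool)

/-- Either the pending claim `(k, b)` of the current block, or its verdict. -/
abbrev Memory (n : ℕ) := (Fin n × Bool) ⊕ Fin (n + 1)

abbrev State (n : ℕ) := Fin (2 * n + 3) × Memory n

variable {n : ℕ}

def update (r : ℕ) (x : Letter n) (q : Memory n) : Memory n :=
  if r = 0 then .inl x.2 else
    match q with
    | .inl (k, b) => if r = k.val + 1 then .inr (if x.1 = b then k.succ else 0) else .inl (k, b)
    | .inr e => .inr e

def step (s : State n) (x : Letter n) : State n :=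
  if h : s.1.val + 1 < 2 * n + 3 then (⟨s.1.val + 1, h⟩, update s.1.val x s.2) else (0, .inr 0)

def colour (s : State n) : ℕ :=
  match s.2 with
  | .inl _ => 1
  | .inr e => if 2 * (n + 1) ≤ s.1.val + e.val then 2 else 1

variable (n) in
def automaton : PACost (State n) (Letter n) := ⟨(0, .inr 0), step, colour, fun _ _ => true⟩

lemma colour_eq_one_or_two (s : State n) : colour s = 1 ∨ colour s = 2 := by
  unfold colour
  split
  · exact .inl rfl
  · split <;> simp

lemma automaton_finBuchi : (automaton n).FinBuchi := ⟨fun _ _ => rfl, colour_eq_one_or_two⟩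

lemma card_state_le (hn : 0 < n) : Fintype.card (State n) ≤ 20 * n ^ 2 := by
  simp only [Fintype.card_prod, Fintype.card_sum, Fintype.card_fin, Fintype.card_bool]
  nlinarith

variable (w : ℕ → Letter n)

/-- Player O's claim at the start of block `t`: the input bit `claimDist w t` positions later
is `(claim w t).2`. -/
def claim (t : ℕ) : Fin n × Bool := (w (t * (2 * n + 3))).2

def claimDist (t : ℕ) : ℕ := (claim w t).1 + 1

def verdict (t : ℕ) : Fin (n + 1) :=
  if (w (t * (2 * n + 3) + claimDist w t)).1 = (claim w t).2 then (claim w t).1.succ else 0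

def blockMemory (t r : ℕ) : Memory n :=
  if r = 0 then .inr 0 else if r ≤ claimDist w t then .inl (claim w t) else .inr (verdict w t)

lemma update_blockMemory (t r : ℕ) :
    update r (w (t * (2 * n + 3) + r)) (blockMemory w t r) = blockMemory w t (r + 1) := by
  have hd : claimDist w t = (claim w t).1 + 1 := rfl
  rcases Nat.eq_zero_or_pos r with rfl | hr
  · simp [update, blockMemory, claim, hd]
  rcases lt_trichotomy r (claimDist w t) with hlt | rfl | hgt
  · simp [update, blockMemory, hr.ne', hlt.le, Nat.succ_le_of_lt hlt, hlt.ne, ← hd]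
  · simp [update, blockMemory, hr.ne', verdict, ← hd]
  · simp [update, blockMemory, hr.ne', hgt.not_ge, (Nat.lt_succ_of_lt hgt).not_ge]

lemma block_coords {t r : ℕ} (hr : r < 2 * n + 3) :
    (t * (2 * n + 3) + r) / (2 * n + 3) = t ∧ (t * (2 * n + 3) + r) % (2 * n + 3) = r :=
  (Nat.div_mod_unique (by omega)).2 ⟨by ring, hr⟩

lemma exists_block_coords (m : ℕ) : ∃ t r, r < 2 * n + 3 ∧ m = t * (2 * n + 3) + r :=
  ⟨_, _, Nat.mod_lt _ (by omega), (Nat.div_add_mod' m _).symm⟩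

lemma stateAt_automaton (m : ℕ) :
    (automaton n).stateAt (automaton n).qI w m =
      (⟨m % (2 * n + 3), Nat.mod_lt _ (by omega)⟩,
        blockMemory w (m / (2 * n + 3)) (m % (2 * n + 3))) := by
  induction m with
  | zero => rfl
  | succ m ih =>
    obtain ⟨t, r, hr, rfl⟩ := exists_block_coords (n := n) m
    show step ((automaton n).stateAt (automaton n).qI w _) (w _) = _
    obtain ⟨ht, hr'⟩ := block_coords (t := t) hr
    rw [ih, step]
    simp only [ht, hr', update_blockMemory]
    split_ifs with hlt
    · obtain ⟨ht1, hr1⟩ := block_coords (t := t) hlt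
      simp only [add_assoc, ht1, hr1]
    · have hnext : t * (2 * n + 3) + r + 1 = (t + 1) * (2 * n + 3) := by rw [add_mul]; omega
      simp only [hnext, Nat.mul_mod_left, Nat.mul_div_cancel _ (show 0 < 2 * n + 3 by omega)]
      rfl

lemma colour_blockMemory (t : ℕ) (r : Fin (2 * n + 3)) :
    colour (r, blockMemory w t r) = if 2 * (n + 1) ≤ r + verdict w t then 2 else 1 := by
  have hd : claimDist w t ≤ n := (claim w t).1.isLt
  have hv : (verdict w t : ℕ) ≤ n := Fin.is_le _
  unfold blockMemory
  split_ifs <;> simp_all [colour] <;> omega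

lemma Ω_stateAt_automaton {t r : ℕ} (hr : r < 2 * n + 3) :
    (automaton n).Ω ((automaton n).stateAt (automaton n).qI w (t * (2 * n + 3) + r)) =
      if 2 * (n + 1) ≤ r + verdict w t then 2 else 1 := by
  obtain ⟨ht, hr'⟩ := block_coords (t := t) hr
  rw [stateAt_automaton]
  refine (colour_blockMemory w _ _).trans ?_
  simp only [ht, hr']

lemma Cor_automaton_le {J : ℕ} (hJ : ∀ t, J ≤ (verdict w t : ℕ)) (m : ℕ) :
    (automaton n).Cor (automaton n).qI w m ≤ (2 * (n + 1) - J : ℕ) := by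
  obtain ⟨t, r, hr, rfl⟩ := exists_block_coords (n := n) m
  have hJt := hJ t
  have hv : (verdict w t : ℕ) ≤ n := Fin.is_le _
  refine PACost.Cor_le_of_exists automaton_finBuchi fun h1 =>
    ⟨t * (2 * n + 3) + (2 * (n + 1) - J), ?_, by omega, ?_⟩
  · rw [Ω_stateAt_automaton w hr, ite_eq_right_iff] at h1
    have := mt h1 (by norm_num)
    omega
  · rw [Ω_stateAt_automaton w (by omega), if_pos (by omega)]

lemma le_Cor_automaton {J : ℕ} (hJ : ∀ t, (verdict w t : ℕ) ≤ J) (t : ℕ) :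
    ((2 * (n + 1) - J : ℕ) : ℕ∞) ≤ (automaton n).Cor (automaton n).qI w (t * (2 * n + 3)) := by
  have hv : (verdict w t : ℕ) ≤ n := Fin.is_le _
  have h0 := Ω_stateAt_automaton w (t := t) (r := 0) (by omega)
  rw [add_zero] at h0
  refine PACost.le_Cor_of_forall automaton_finBuchi (by rw [h0, if_neg (by omega)]) ?_
  intro m' hlt h2
  obtain ⟨t', r', hr', rfl⟩ := exists_block_coords (n := n) m'
  rw [Ω_stateAt_automaton w hr', ite_eq_left_iff] at h2
  have h := not_not.1 (mt h2 (by norm_num))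
  have block_le : ∀ {a b : ℕ}, a < b → a * (2 * n + 3) + (2 * n + 3) ≤ b * (2 * n + 3) :=
    fun hab => (Nat.succ_mul _ _).symm.trans_le (Nat.mul_le_mul_right _ hab)
  rcases lt_trichotomy t' t with ht | rfl | ht
  · have := block_le ht
    omega
  · have := hJ t'
    omega
  · have := block_le ht
    omega

lemma wCost_automaton_le {J : ℕ} (hJ : ∀ t, J ≤ (verdict w t : ℕ)) :
    (automaton n).wCost w ≤ (2 * (n + 1) - J : ℕ) :=
  Filter.limsup_le_of_le (by isBoundedDefault) (.of_forall (Cor_automaton_le w hJ))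

lemma le_wCost_automaton {J : ℕ} (hJ : ∀ t, (verdict w t : ℕ) ≤ J) :
    ((2 * (n + 1) - J : ℕ) : ℕ∞) ≤ (automaton n).wCost w :=
  Filter.le_limsup_of_frequently_le
    (Filter.frequently_atTop.2 fun N => ⟨N * (2 * n + 3), by nlinarith, le_Cor_automaton w hJ N⟩)
    (by isBoundedDefault)

variable (n) in
lemma Lang_automaton : (automaton n).Lang = Set.univ :=
  Set.eq_univ_of_forall fun w =>
    (wCost_automaton_le w (J := 0) fun _ => Nat.zero_le _).trans_lt (ENat.natCast_lt_top _)

/-- Claim that the last bit seen lies `k + 1` positions ahead of the current one. -/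
def truthfulClaim (k : Fin n) (h : List Bool) : Fin n × Bool := (k, h.getLastD false)

lemma verdict_outcome_truthfulClaim {j : ℕ} {k : Fin n} (hk : k.val + 1 = j) (α : ℕ → Bool)
    (t : ℕ) : (verdict (outcome j (truthfulClaim k) α) t : ℕ) = j := by
  have hc : claim (outcome j (truthfulClaim k) α) t = (k, α (t * (2 * n + 3) + j)) := by
    simp [claim, outcome, truthfulClaim, List.getLastD_eq_getLast?, List.getLast?_range]
  have hd : claimDist (outcome j (truthfulClaim k) α) t = j := by rw [claimDist, hc, hk]
  simp [verdict, hd, hc, outcome, hk]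

/-- Player I refutes every claim about a bit that Player O has not seen yet. -/
def spoiler (j : ℕ) (τO : List Bool → Fin n × Bool) : ℕ → Bool :=
  seqOfPrefix fun l =>
    let c := τO (l.take (l.length / (2 * n + 3) * (2 * n + 3) + j + 1))
    if j < l.length % (2 * n + 3) ∧ l.length % (2 * n + 3) = c.1 + 1 then !c.2 else false

lemma verdict_outcome_spoiler_le (j : ℕ) (τO : List Bool → Fin n × Bool) (t : ℕ) :
    (verdict (outcome j τO (spoiler j τO)) t : ℕ) ≤ j := by
  set w := outcome j τO (spoiler j τO)
  have hle : (verdict w t : ℕ) ≤ claimDist w t := by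
    unfold verdict claimDist
    split_ifs <;> simp
  rcases le_or_gt (claimDist w t) j with h | h
  · exact hle.trans h
  have hd : claimDist w t < 2 * n + 3 := by have := (claim w t).1.isLt; unfold claimDist; omega
  obtain ⟨ht, hr⟩ := block_coords (t := t) hd
  have hspoil : spoiler j τO (t * (2 * n + 3) + claimDist w t) = !(claim w t).2 := by
    rw [spoiler, seqOfPrefix_apply, ← spoiler]
    simp only [List.length_map, List.length_range, ht, hr, ← List.map_take, List.take_range,
      min_eq_left (show t * (2 * n + 3) + j + 1 ≤ t * (2 * n + 3) + claimDist w t by omega)]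
    rw [if_pos ⟨h, rfl⟩]
    rfl
  have : verdict w t = 0 := by
    rw [verdict, if_neg]
    show ¬ spoiler j τO _ = _
    rw [hspoil]
    simp
  simp [this]

variable (n) in
lemma exists_stratCost_automaton_le (hn : 0 < n) {j : ℕ} (hj : j ≤ n) :
    ∃ τO, stratCost (automaton n).wCost (constDF j) τO ≤ (2 * (n + 1) - j : ℕ) := by
  refine ⟨truthfulClaim ⟨j - 1, by omega⟩, ?_⟩
  rw [stratCost_constDF]
  refine iSup_le fun α => wCost_automaton_le _ fun t => ?_
  rcases Nat.eq_zero_or_pos j with rfl | hj0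
  · exact Nat.zero_le _
  · exact (verdict_outcome_truthfulClaim (by simp; omega) α t).ge

lemma le_stratCost_automaton (j : ℕ) (τO : List Bool → Fin n × Bool) :
    ((2 * (n + 1) - j : ℕ) : ℕ∞) ≤ stratCost (automaton n).wCost (constDF j) τO := by
  rw [stratCost_constDF]
  exact le_iSup_of_le (spoiler j τO) (le_wCost_automaton _ (verdict_outcome_spoiler_le j τO))

end GradualTradeoff

open GradualTradeoff in
/-- Theorem 8, gradual tradeoff. There is a quadratic-size family of
finitary Büchi automata `A''_n` over `{0,1} × ({1,…,n} × {0,1})` such that for every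
`j ∈ {0, …, n}`, Player O wins with lookahead `j` and an optimal winning strategy with
lookahead `j` exists and has cost `2(n+1) - j`. -/
theorem statement14 :
    ∃ c : ℕ, 0 < c ∧ ∀ n : ℕ, 0 < n →
      ∃ m : ℕ, ∃ M : PACost (Fin m) (Bool × (Fin n × Bool)),
        m ≤ c * n ^ 2 ∧ M.FinBuchi ∧
        ∀ j : ℕ, j ≤ n →
          OWins (constDF j) M.Lang ∧
          OptimalCostIs M.Lang M.wCost (constDF j) ((2 * (n + 1) - j : ℕ) : ℕ∞) := by
  refine ⟨20, by norm_num, fun n hn => ⟨_, (automaton n).mapEquiv (Fintype.equivFin _),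
    card_state_le hn, PACost.finBuchi_mapEquiv _ _ automaton_finBuchi, fun j hj => ?_⟩⟩
  rw [PACost.Lang_mapEquiv, PACost.wCost_mapEquiv, Lang_automaton]
  have hwin : ∀ τO, OWinning (constDF j) (Set.univ : Set (ℕ → Letter n)) τO :=
    fun _ _ _ _ _ => trivial
  obtain ⟨τO, hτO⟩ := exists_stratCost_automaton_le n hn hj
  exact ⟨⟨τO, hwin τO⟩, ⟨τO, hwin τO, le_antisymm hτO (le_stratCost_automaton j τO)⟩,
    fun τO' _ => le_stratCost_automaton j τO'⟩
end
end
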